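/- Suppose polynomials q_p (indexed by a set of polynomials P), q_u (indexed by universal variables u) and q over the rationals satisfy the identity Σ_p q_p·p + Σ_u q_u·(1-2u) + q + 1 = 0, where each q_u depends only on variables quantified before u, each p in P vanishes on every assignment produced by the existential winning strategy, and q is non-negative on all Boolean assignments. Then the existential player has no winning strategy; i.e., no such identity exists if the QBF is true. (Soundness of Q-SOS/Q-SA/Q-NS.) -/

import Mathlib

open MvPolynomial

/-- The rational value of a Boolean. -/
noncomputable def bval (b : Bool) : ℚ := if b then 1 else 0

/-!
Suppose the existential player had a winning strategy `σ`, and let the universal player answer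
uniformly at random. Evaluating the identity at the resulting play, every `p ∈ P` vanishes, `q`
is non-negative and the constant contributes `1`. The term `q_u · (1 - 2u)` has expectation
zero: flipping the universal choice at `u` does not change the earlier variables, hence not
`q_u`, but negates `1 - 2u`. So the expectation of the left-hand side is at least `1`, not `0`.
-/

lemma sum_mul_one_sub_two_bval_eq_zero {ι : Type*} [Fintype ι] [DecidableEq ι] (u : ι)
    (g : (ι → Bool) → ℚ) (hg : ∀ τ, g (Function.update τ u (!τ u)) = g τ) :
    ∑ τ, g τ * (1 - 2 * bval (τ u)) = 0 := by
  have hflip : Function.Involutive fun τ : ι → Bool => Function.update τ u (!τ u) := by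
    intro τ
    funext j
    rcases eq_or_ne j u with rfl | hj
    · simp
    · simp [Function.update_of_ne hj]
  have hneg := (Equiv.sum_comp hflip.toPerm fun τ => g τ * (1 - 2 * bval (τ u))).symm
  have hodd : ∀ τ : ι → Bool, g (Function.update τ u (!τ u)) *
      (1 - 2 * bval (Function.update τ u (!τ u) u)) = -(g τ * (1 - 2 * bval (τ u))) := by
    intro τ
    rw [hg, Function.update_self]
    cases τ u <;> simp only [bval] <;> norm_num
  simp only [Function.Involutive.coe_toPerm, hodd, Finset.sum_neg_distrib] at hneg
  linarith

section Play

variable {n : ℕ} (E : Fin n → Prop) [DecidablePred E] (σ : Fin n → (Fin n → Bool) → Bool)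

/-- The play in which the existential player follows `σ` (fed with the values played so far)
and the universal player sets each universal variable `i` to `τ i`; the values of `τ` at
existential variables are ignored. -/
def play (τ : Fin n → Bool) (i : Fin n) : Bool :=
  if E i then σ i (fun j => if _h : j < i then play τ j else false) else τ i
termination_by (i : ℕ)
decreasing_by exact _h

variable {E σ}

lemma play_of_not_existential {τ : Fin n → Bool} {i : Fin n} (hi : ¬ E i) :
    play E σ τ i = τ i := by
  rw [play, if_neg hi]

lemma play_of_existential
    (hσ : ∀ i : Fin n, ∀ α α' : Fin n → Bool, (∀ j, j < i → α j = α' j) → σ i α = σ i α')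
    {τ : Fin n → Bool} {i : Fin n} (hi : E i) :
    play E σ τ i = σ i (play E σ τ) := by
  rw [play, if_pos hi]
  exact hσ i _ _ fun j hj => dif_pos hj

lemma play_eq_of_forall_lt_eq {τ τ' : Fin n → Bool} {k : Fin n}
    (h : ∀ j, j < k → τ j = τ' j) : ∀ j, j < k → play E σ τ j = play E σ τ' j := by
  intro j
  induction j using WellFoundedLT.induction with
  | ind j ih =>
    intro hj
    rw [play, play]
    split_ifs with hE
    · congr 1
      funext l
      split_ifs with hl
      exacts [ih l hl (hl.trans hj), rfl]
    · exact h j hj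

lemma eval_play_update_eq {f : MvPolynomial (Fin n) ℚ} {u : Fin n} (hf : ∀ v ∈ f.vars, v < u)
    (τ : Fin n → Bool) (b : Bool) :
    eval (fun i => bval (play E σ (Function.update τ u b) i)) f =
      eval (fun i => bval (play E σ τ i)) f := by
  have hagree : ∀ j, j < u → Function.update τ u b j = τ j :=
    fun j hj => Function.update_of_ne hj.ne _ _
  exact eval₂Hom_congr' rfl
    (fun v hv _ => congrArg bval (play_eq_of_forall_lt_eq hagree v (hf v hv))) rfl

lemma sum_eval_play_mul_one_sub_two_X_eq_zero {f : MvPolynomial (Fin n) ℚ} {u : Fin n}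
    (hu : ¬ E u) (hf : ∀ v ∈ f.vars, v < u) :
    ∑ τ, eval (fun i => bval (play E σ τ i)) (f * (1 - 2 * X u)) = 0 := by
  simp only [map_mul, map_sub, map_one, map_ofNat, eval_X, play_of_not_existential hu]
  exact sum_mul_one_sub_two_bval_eq_zero u _ fun τ => eval_play_update_eq hf τ _

end Play

theorem stmt_5 (n : ℕ) (E : Fin n → Prop) [DecidablePred E]
    (P : Finset (MvPolynomial (Fin n) ℚ))
    (qp : MvPolynomial (Fin n) ℚ → MvPolynomial (Fin n) ℚ)
    (qu : Fin n → MvPolynomial (Fin n) ℚ)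
    (q : MvPolynomial (Fin n) ℚ)
    (hvars : ∀ u : Fin n, ¬ E u → ∀ v ∈ (qu u).vars, v < u)
    (hq : ∀ α : Fin n → Bool, 0 ≤ eval (fun i => bval (α i)) q)
    (hid : ∑ p ∈ P, qp p * p
        + ∑ u ∈ Finset.univ.filter (fun u => ¬ E u), qu u * (1 - 2 * X u)
        + q + 1 = 0) :
    ¬ ∃ σ : Fin n → (Fin n → Bool) → Bool,
        (∀ i : Fin n, ∀ α α' : Fin n → Bool, (∀ j, j < i → α j = α' j) → σ i α = σ i α') ∧
        (∀ α : Fin n → Bool, (∀ i, E i → α i = σ i α) →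
          ∀ p ∈ P, eval (fun i => bval (α i)) p = 0) := by
  rintro ⟨σ, hσ, hwin⟩
  set x : (Fin n → Bool) → Fin n → ℚ := fun τ i => bval (play E σ τ i)
  have hP : ∀ τ, eval (x τ) (∑ p ∈ P, qp p * p) = 0 := fun τ => by
    have hvanish : ∀ p ∈ P, eval (x τ) p = 0 :=
      hwin (play E σ τ) fun i => play_of_existential hσ
    rw [map_sum]
    exact Finset.sum_eq_zero fun p hp => by rw [map_mul, hvanish p hp, mul_zero]
  have hU : ∑ τ, eval (x τ) (∑ u ∈ Finset.univ.filter (fun u => ¬ E u), qu u * (1 - 2 * X u))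
      = 0 := by
    simp only [map_sum]
    rw [Finset.sum_comm]
    refine Finset.sum_eq_zero fun u hmem => ?_
    have hu : ¬ E u := (Finset.mem_filter.mp hmem).2
    exact sum_eval_play_mul_one_sub_two_X_eq_zero hu (hvars u hu)
  have hQ : 0 ≤ ∑ τ, eval (x τ) q := Finset.sum_nonneg fun τ _ => hq _
  have hsum : ∑ τ, eval (x τ) (∑ p ∈ P, qp p * p
      + ∑ u ∈ Finset.univ.filter (fun u => ¬ E u), qu u * (1 - 2 * X u) + q + 1) = 0 := by
    simp [hid]
  simp only [map_add, map_one, Finset.sum_add_distrib, hP, hU, Finset.sum_const_zero,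
    Finset.sum_const, Finset.card_univ, nsmul_eq_mul, mul_one] at hsum
  have hcard : (0 : ℚ) < Fintype.card (Fin n → Bool) := by exact_mod_cast Fintype.card_pos
  linarith
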